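/- Let p be an odd prime and λ = (λ₁, λ₂) ∈ {(1,0)} ∪ {(i,1) : 0 ≤ i ≤ p−1}. For integers k₁, k₂, l₁, l₂ and K₁, K₂, L₁, L₂, the elements u = a₁^{k₁}a₂^{k₂}b₁^{l₁}b₂^{l₂} and v = a₁^{K₁}a₂^{K₂}b₁^{L₁}b₂^{L₂} of G_λ^(p) commute if and only if at least one of the following holds modulo p: (k₁,k₂,l₁,l₂) ≡ (0,0,0,0); or (K₁,K₂,L₁,L₂) ≡ (0,0,0,0); or l₁ ≡ l₂ ≡ L₁ ≡ L₂ ≡ 0; or k₁ ≡ k₂ ≡ K₁ ≡ K₂ ≡ 0; or there exists an integer n with (K₁,K₂,L₁,L₂) ≡ n·(k₁,k₂,l₁,l₂) componentwise modulo p. -/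

import Mathlib

/-!
The group `G_λ` has class 2, and `[aᵢ, b_j]^p = [aᵢ^p, b_j] = 1` because `aᵢ^p` is itself a
commutator. Expanding bilinearly, `[u, v] = ∏ [aᵢ, b_j]^(kᵢ L_j - Kᵢ l_j)`, so `u` and `v` commute
as soon as the matrix `k Lᵀ - K lᵀ` vanishes mod `p`.

Conversely the four commutators `[aᵢ, b_j]` are independent of order `p`. To see this, write
`x ∈ ℤ⁴` as a pair `(k(x), l(x))` of exponent vectors for `a` and `b`, and give `ℤ⁴ × M₂(𝔽_p)` the
product `(x, c) (y, c') = (x + y, c + c' + k(x) l(y)ᵀ)`, in which `[u, v] = (0, k Lᵀ - K lᵀ)`.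
The power relations of `G_λ` hold modulo the central subgroup `{(p t, ψ t)}` for a suitable
linear `ψ`, which meets the fibre `{0} × M₂(𝔽_p)` trivially, so `G_λ` maps to the quotient and
`[u, v] = 1` forces `k Lᵀ = K lᵀ` over `𝔽_p`. Finally, over a field `k Lᵀ = K lᵀ` holds exactly in
the five listed cases.
-/

def gcomm {G : Type*} [Group G] (x y : G) : G := x⁻¹ * y⁻¹ * x * y

def jkRels (p : ℕ) (lam : ℕ × ℕ) : Set (FreeGroup (Fin 4)) :=
  {r | ∃ i j k : Fin 4,
      r = gcomm (gcomm (FreeGroup.of i) (FreeGroup.of j)) (FreeGroup.of k)} ∪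
  {FreeGroup.of 0 ^ p * (gcomm (FreeGroup.of 0) (FreeGroup.of 2))⁻¹,
   FreeGroup.of 1 ^ p *
     (gcomm (FreeGroup.of 0) (FreeGroup.of 2 ^ lam.1 * FreeGroup.of 3 ^ lam.2))⁻¹,
   FreeGroup.of 2 ^ p * (gcomm (FreeGroup.of 1) (FreeGroup.of 2 * FreeGroup.of 3))⁻¹,
   FreeGroup.of 3 ^ p * (gcomm (FreeGroup.of 1) (FreeGroup.of 3))⁻¹,
   gcomm (FreeGroup.of 0) (FreeGroup.of 1),
   gcomm (FreeGroup.of 2) (FreeGroup.of 3)}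

abbrev JKGroup (p : ℕ) (lam : ℕ × ℕ) : Type := PresentedGroup (jkRels p lam)

def jka₁ (p : ℕ) (lam : ℕ × ℕ) : JKGroup p lam := PresentedGroup.of 0
def jka₂ (p : ℕ) (lam : ℕ × ℕ) : JKGroup p lam := PresentedGroup.of 1
def jkb₁ (p : ℕ) (lam : ℕ × ℕ) : JKGroup p lam := PresentedGroup.of 2
def jkb₂ (p : ℕ) (lam : ℕ × ℕ) : JKGroup p lam := PresentedGroup.of 3

section Commutator

variable {G : Type*} [Group G]

lemma map_gcomm {H F : Type*} [Group H] [FunLike F G H] [MonoidHomClass F G H] (f : F)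
    (x y : G) : f (gcomm x y) = gcomm (f x) (f y) := by
  simp only [gcomm, map_mul, map_inv]

lemma mul_eq_mul_mul_gcomm (x y : G) : x * y = y * x * gcomm x y := by
  simp only [gcomm]; group

lemma commute_iff_gcomm_eq_one {x y : G} : Commute x y ↔ gcomm x y = 1 := by
  rw [Commute, SemiconjBy, mul_eq_mul_mul_gcomm x y, mul_eq_left]

lemma gcomm_swap (x y : G) : gcomm y x = (gcomm x y)⁻¹ := by
  simp only [gcomm]; group

lemma gcomm_self (x : G) : gcomm x x = 1 := by
  simp only [gcomm]; group

lemma gcomm_eq_one_of_mem_center {x : G} (hx : x ∈ Subgroup.center G) (y : G) :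
    gcomm x y = 1 :=
  commute_iff_gcomm_eq_one.mp (Subgroup.mem_center_iff.mp hx y).symm

lemma zpow_eq_one_of_intCast_eq_zero {x : G} {n : ℕ} (hx : x ^ n = 1) {e : ℤ}
    (he : (e : ZMod n) = 0) : x ^ e = 1 := by
  obtain ⟨t, rfl⟩ := (ZMod.intCast_zmod_eq_zero_iff_dvd e n).mp he
  rw [zpow_mul, zpow_natCast, hx, one_zpow]

lemma mem_center_of_forall_commute {ι : Type*} {f : ι → G}
    (hf : Subgroup.closure (Set.range f) = ⊤) {z : G} (hz : ∀ i, Commute z (f i)) :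
    z ∈ Subgroup.center G := by
  rw [← Subgroup.centralizer_univ, ← Subgroup.coe_top, ← hf, Subgroup.centralizer_closure,
    Subgroup.mem_centralizer_iff, Set.forall_mem_range]
  exact fun i => (hz i).symm.eq

lemma gcomm_mem_center_of_closure {ι : Type*} {f : ι → G}
    (hf : Subgroup.closure (Set.range f) = ⊤)
    (h : ∀ i j k, gcomm (gcomm (f i) (f j)) (f k) = 1) (x y : G) :
    gcomm x y ∈ Subgroup.center G := by
  have hgen (i j : ι) : gcomm (f i) (f j) ∈ Subgroup.center G :=
    mem_center_of_forall_commute hf fun k => commute_iff_gcomm_eq_one.mpr (h i j k)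
  let π := QuotientGroup.mk' (Subgroup.center G)
  have hπf : Subgroup.closure (Set.range (π ∘ f)) = ⊤ := by
    rw [Set.range_comp, ← MonoidHom.map_closure, hf, ← MonoidHom.range_eq_map,
      MonoidHom.range_eq_top]
    exact QuotientGroup.mk'_surjective _
  have hπ {u v : G} : Commute (π u) (π v) ↔ gcomm u v ∈ Subgroup.center G := by
    rw [commute_iff_gcomm_eq_one, ← map_gcomm, QuotientGroup.mk'_apply, QuotientGroup.eq_one_iff]
  have hcenter : Subgroup.center (G ⧸ Subgroup.center G) = ⊤ := by
    rw [eq_top_iff, ← hπf, Subgroup.closure_le, Set.range_subset_iff]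
    exact fun i => mem_center_of_forall_commute hπf fun j => hπ.mpr (hgen i j)
  exact hπ.mp (Subgroup.mem_center_iff.mp (hcenter ▸ Subgroup.mem_top (π y)) (π x))

end Commutator

section ClassTwo

variable {G : Type*} [Group G] (h : ∀ x y : G, gcomm x y ∈ Subgroup.center G)
include h

lemma gcomm_mul_left (x y z : G) : gcomm (x * y) z = gcomm x z * gcomm y z := by
  calc gcomm (x * y) z = y⁻¹ * gcomm x z * z⁻¹ * y * z := by simp only [gcomm]; group
    _ = gcomm x z * gcomm y z := by
      rw [Subgroup.mem_center_iff.mp (h x z) y⁻¹]; simp only [gcomm]; group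

lemma gcomm_mul_right (x y z : G) : gcomm x (y * z) = gcomm x y * gcomm x z := by
  rw [gcomm_swap, gcomm_mul_left h, mul_inv_rev, ← gcomm_swap, ← gcomm_swap]
  exact Subgroup.mem_center_iff.mp (h x y) _

lemma gcomm_zpow_left (x y : G) (n : ℤ) : gcomm (x ^ n) y = gcomm x y ^ n :=
  map_zpow (MonoidHom.mk' (gcomm · y) fun a b => gcomm_mul_left h a b y) x n

lemma gcomm_zpow_right (x y : G) (n : ℤ) : gcomm x (y ^ n) = gcomm x y ^ n :=
  map_zpow (MonoidHom.mk' (gcomm x ·) fun a b => gcomm_mul_right h x a b) y n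

lemma gcomm_pow_eq_one_of_pow_mem_center {x : G} {n : ℕ} (hx : x ^ n ∈ Subgroup.center G)
    (y : G) : gcomm x y ^ n = 1 := by
  rw [← zpow_natCast, ← gcomm_zpow_left h, zpow_natCast, gcomm_eq_one_of_mem_center hx]

open scoped IsMulCommutative in
lemma gcomm_words {a₁ a₂ b₁ b₂ : G} (ha : gcomm a₁ a₂ = 1) (hb : gcomm b₁ b₂ = 1)
    (k₁ k₂ l₁ l₂ K₁ K₂ L₁ L₂ : ℤ) :
    gcomm (a₁ ^ k₁ * a₂ ^ k₂ * b₁ ^ l₁ * b₂ ^ l₂) (a₁ ^ K₁ * a₂ ^ K₂ * b₁ ^ L₁ * b₂ ^ L₂) =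
      gcomm a₁ b₁ ^ (k₁ * L₁ - K₁ * l₁) * gcomm a₁ b₂ ^ (k₁ * L₂ - K₁ * l₂) *
        gcomm a₂ b₁ ^ (k₂ * L₁ - K₂ * l₁) * gcomm a₂ b₂ ^ (k₂ * L₂ - K₂ * l₂) := by
  have ha' : gcomm a₂ a₁ = 1 := by rw [gcomm_swap, ha, inv_one]
  have hb' : gcomm b₂ b₁ = 1 := by rw [gcomm_swap, hb, inv_one]
  simp only [gcomm_mul_left h, gcomm_mul_right h, gcomm_zpow_left h, gcomm_zpow_right h,
    gcomm_self, ha, hb, ha', hb', gcomm_swap a₁ b₁, gcomm_swap a₂ b₁, gcomm_swap a₁ b₂,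
    gcomm_swap a₂ b₂, one_zpow, one_mul, mul_one]
  -- What is left is an identity between products of powers in the abelian group `center G`.
  lift gcomm a₁ b₁ to Subgroup.center G using h _ _ with c₁₁
  lift gcomm a₁ b₂ to Subgroup.center G using h _ _ with c₁₂
  lift gcomm a₂ b₁ to Subgroup.center G using h _ _ with c₂₁
  lift gcomm a₂ b₂ to Subgroup.center G using h _ _ with c₂₂
  norm_cast
  apply Additive.ofMul.injective
  simp only [ofMul_mul, ofMul_zpow, ofMul_inv]
  module

end ClassTwo

open Matrix in
theorem vecMulVec_eq_vecMulVec_iff {F ι κ : Type*} [Field F] {k K : ι → F} {l L : κ → F} :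
    vecMulVec k L = vecMulVec K l ↔
      (k = 0 ∧ l = 0) ∨ (K = 0 ∧ L = 0) ∨ (l = 0 ∧ L = 0) ∨ (k = 0 ∧ K = 0) ∨
        ∃ c : F, K = c • k ∧ L = c • l := by
  constructor
  · intro h
    have h' (i : ι) (j : κ) : k i * L j = K i * l j := by
      simpa only [vecMulVec_apply] using congrFun₂ h i j
    by_cases hk : k = 0
    · by_cases hl : l = 0
      · exact Or.inl ⟨hk, hl⟩
      obtain ⟨j, hj⟩ := Function.ne_iff.mp hl
      rw [Pi.zero_apply] at hj
      refine Or.inr <| Or.inr <| Or.inr <| Or.inl ⟨hk, funext fun i => ?_⟩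
      simpa [hk, hj] using (h' i j).symm
    obtain ⟨i, hi⟩ := Function.ne_iff.mp hk
    rw [Pi.zero_apply] at hi
    by_cases hl : l = 0
    · refine Or.inr <| Or.inr <| Or.inl ⟨hl, funext fun j => ?_⟩
      simpa [hl, hi] using h' i j
    obtain ⟨j, hj⟩ := Function.ne_iff.mp hl
    rw [Pi.zero_apply] at hj
    refine Or.inr <| Or.inr <| Or.inr <| Or.inr
      ⟨K i / k i, funext fun i' => ?_, funext fun j' => ?_⟩
    · simp only [Pi.smul_apply, smul_eq_mul]
      field_simp
      apply mul_right_cancel₀ hj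
      linear_combination k i' * h' i j - k i * h' i' j
    · simp only [Pi.smul_apply, smul_eq_mul]
      field_simp
      linear_combination h' i j'
  · rintro (⟨rfl, rfl⟩ | ⟨rfl, rfl⟩ | ⟨rfl, rfl⟩ | ⟨rfl, rfl⟩ | ⟨c, rfl, rfl⟩) <;> ext i j <;>
      simp [vecMulVec_apply]
    ring

@[ext]
structure TwistedProd {A C : Type*} [AddCommGroup A] [AddCommGroup C] (β : A →+ A →+ C) where
  base : A
  fiber : C

namespace TwistedProd

variable {A C : Type*} [AddCommGroup A] [AddCommGroup C] {β : A →+ A →+ C}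

instance : Mul (TwistedProd β) :=
  ⟨fun x y => ⟨x.base + y.base, x.fiber + y.fiber + β x.base y.base⟩⟩
instance : One (TwistedProd β) := ⟨⟨0, 0⟩⟩
instance : Inv (TwistedProd β) := ⟨fun x => ⟨-x.base, -x.fiber + β x.base x.base⟩⟩

@[simp] lemma base_mul (x y : TwistedProd β) : (x * y).base = x.base + y.base := rfl
@[simp] lemma fiber_mul (x y : TwistedProd β) :
    (x * y).fiber = x.fiber + y.fiber + β x.base y.base := rfl
@[simp] lemma base_one : (1 : TwistedProd β).base = 0 := rfl
@[simp] lemma fiber_one : (1 : TwistedProd β).fiber = 0 := rfl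
@[simp] lemma base_inv (x : TwistedProd β) : x⁻¹.base = -x.base := rfl
@[simp] lemma fiber_inv (x : TwistedProd β) : x⁻¹.fiber = -x.fiber + β x.base x.base := rfl

instance : Group (TwistedProd β) where
  mul_assoc x y z := by
    ext
    · exact add_assoc _ _ _
    · simp only [base_mul, fiber_mul, map_add, AddMonoidHom.add_apply]; abel
  one_mul x := by ext <;> simp
  mul_one x := by ext <;> simp
  inv_mul_cancel x := by ext <;> simp

lemma gcomm_eq (x y : TwistedProd β) :
    gcomm x y = ⟨0, β x.base y.base - β y.base x.base⟩ := by
  ext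
  · simp [gcomm]
  · simp only [gcomm, fiber_mul, fiber_inv, base_inv, map_neg, AddMonoidHom.neg_apply, neg_neg,
      base_mul, map_add, AddMonoidHom.add_apply, neg_add_cancel_comm]
    abel

lemma mem_center_of_cocycle_eq_zero {x : TwistedProd β} (hl : ∀ a, β x.base a = 0)
    (hr : ∀ a, β a x.base = 0) : x ∈ Subgroup.center (TwistedProd β) :=
  Subgroup.mem_center_iff.mpr fun y => by ext <;> simp [hl, hr, add_comm]

lemma gcomm_mem_center (x y : TwistedProd β) : gcomm x y ∈ Subgroup.center (TwistedProd β) :=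
  mem_center_of_cocycle_eq_zero (by simp [gcomm_eq]) (by simp [gcomm_eq])

def baseHom : TwistedProd β →* Multiplicative A where
  toFun x := .ofAdd x.base
  map_one' := rfl
  map_mul' _ _ := rfl

lemma base_zpow (x : TwistedProd β) (n : ℤ) : (x ^ n).base = n • x.base :=
  congrArg Multiplicative.toAdd (map_zpow baseHom x n)

lemma pow_of_isotropic {x : TwistedProd β} (hx : β x.base x.base = 0) (n : ℕ) :
    x ^ n = ⟨n • x.base, n • x.fiber⟩ := by
  induction n with
  | zero => ext <;> simp
  | succ n ih => ext <;> simp [pow_succ, ih, succ_nsmul, hx]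

section Graph

variable (β) (n : ℕ) (ψ : A →+ C) (hn : ∀ c : C, n • c = 0)

def graph : Subgroup (TwistedProd β) where
  carrier := Set.range fun t => ⟨n • t, ψ t⟩
  mul_mem' := by
    rintro _ _ ⟨s, rfl⟩ ⟨t, rfl⟩
    exact ⟨s + t, by ext <;> simp [hn]⟩
  one_mem' := ⟨0, by ext <;> simp⟩
  inv_mem' := by
    rintro _ ⟨t, rfl⟩
    exact ⟨-t, by ext <;> simp [hn]⟩

variable {β n ψ hn}

lemma graph_le_center : graph β n ψ hn ≤ Subgroup.center (TwistedProd β) := by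
  rintro _ ⟨t, rfl⟩
  exact mem_center_of_cocycle_eq_zero (by simp [hn]) (by simp [hn])

instance : (graph β n ψ hn).Normal :=
  ⟨fun x hx g => by rwa [Subgroup.mem_center_iff.mp (graph_le_center hx) g, mul_inv_cancel_right]⟩

lemma mk_zero_mem_graph_iff [IsAddTorsionFree A] (hn0 : n ≠ 0) {c : C} :
    (⟨0, c⟩ : TwistedProd β) ∈ graph β n ψ hn ↔ c = 0 := by
  constructor
  · rintro ⟨t, ht⟩
    obtain rfl : t = 0 := (nsmul_eq_zero_iff_right hn0).mp (congrArg base ht)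
    simpa using (congrArg fiber ht).symm
  · rintro rfl
    exact ⟨0, by ext <;> simp⟩

end Graph

end TwistedProd

section Model

open Matrix TwistedProd

variable (p : ℕ) (lam : ℕ × ℕ)

def jkCocycle :
    (Fin 2 → ℤ) × (Fin 2 → ℤ) →+ (Fin 2 → ℤ) × (Fin 2 → ℤ) →+ Matrix (Fin 2) (Fin 2) (ZMod p) :=
  AddMonoidHom.mk'
    (fun x => AddMonoidHom.mk'
      (fun y => vecMulVec (fun i => (x.1 i : ZMod p)) fun j => (y.2 j : ZMod p))
      fun y y' => by ext; simp [vecMulVec_apply, mul_add])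
    fun x x' => by ext; simp [vecMulVec_apply, add_mul]

@[simp] lemma jkCocycle_apply (x y : (Fin 2 → ℤ) × (Fin 2 → ℤ)) :
    jkCocycle p x y = vecMulVec (fun i => (x.1 i : ZMod p)) fun j => (y.2 j : ZMod p) := rfl

/- For the four unit vectors `t`, `⟨p • t, jkRelMap p lam t⟩` is the image under `jkCoverGen` of
the relator `a₁^p [a₁,b₁]⁻¹`, `a₂^p [a₁, b₁^λ₁ b₂^λ₂]⁻¹`, `b₁^p [a₂, b₁b₂]⁻¹`, `b₂^p [a₂,b₂]⁻¹`
respectively. -/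
def jkRelMap : (Fin 2 → ℤ) × (Fin 2 → ℤ) →+ Matrix (Fin 2) (Fin 2) (ZMod p) :=
  AddMonoidHom.mk'
    (fun t => -(!![t.1 0 + lam.1 * t.1 1, lam.2 * t.1 1; t.2 0, t.2 0 + t.2 1].map Int.cast))
    fun s t => by ext i j; fin_cases i <;> fin_cases j <;> simp <;> ring

abbrev JKCover := TwistedProd (jkCocycle p)

abbrev jkCoverRels : Subgroup (JKCover p) :=
  graph (jkCocycle p) p (jkRelMap p lam) (ZModModule.char_nsmul_eq_zero p)

def jkCoverGen : Fin 4 → JKCover p :=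
  ![⟨(Pi.single 0 1, 0), 0⟩, ⟨(Pi.single 1 1, 0), 0⟩, ⟨(0, Pi.single 0 1), 0⟩,
    ⟨(0, Pi.single 1 1), 0⟩]

lemma jkCoverGen_pow (i : Fin 4) (n : ℕ) :
    jkCoverGen p i ^ n = ⟨n • (jkCoverGen p i).base, 0⟩ := by
  rw [pow_of_isotropic]
  · fin_cases i <;> simp [jkCoverGen]
  · fin_cases i <;> ext <;> simp [jkCoverGen, vecMulVec_apply]

lemma lift_jkCoverGen_mem {r : FreeGroup (Fin 4)} (hr : r ∈ jkRels p lam) :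
    FreeGroup.lift (jkCoverGen p) r ∈ jkCoverRels p lam := by
  rcases hr with ⟨i, j, k, rfl⟩ | hr
  · rw [map_gcomm, map_gcomm, gcomm_eq_one_of_mem_center (gcomm_mem_center _ _)]
    exact one_mem _
  simp only [Set.mem_insert_iff, Set.mem_singleton_iff] at hr
  rcases hr with rfl | rfl | rfl | rfl | rfl | rfl
  on_goal 1 => refine ⟨(Pi.single 0 1, 0), ?_⟩
  on_goal 2 => refine ⟨(Pi.single 1 1, 0), ?_⟩
  on_goal 3 => refine ⟨(0, Pi.single 0 1), ?_⟩
  on_goal 4 => refine ⟨(0, Pi.single 1 1), ?_⟩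
  on_goal 5 => refine ⟨0, ?_⟩
  on_goal 6 => refine ⟨0, ?_⟩
  all_goals
    simp only [map_mul, map_pow, map_inv, map_gcomm, FreeGroup.lift_apply_of, jkCoverGen_pow]
    apply TwistedProd.ext
    · simp [jkCoverGen, gcomm_eq]
    · ext i j
      fin_cases i <;> fin_cases j <;> simp [jkCoverGen, gcomm_eq, jkRelMap, vecMulVec_apply]

end Model

lemma PresentedGroup.lift_of_eq_one_of_mem {α : Type*} {rels : Set (FreeGroup α)}
    {r : FreeGroup α} (hr : r ∈ rels) :
    FreeGroup.lift (PresentedGroup.of (rels := rels)) r = 1 := by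
  rw [← FreeGroup.lift_unique (PresentedGroup.mk rels) (f := PresentedGroup.of) fun _ => rfl]
  exact PresentedGroup.one_of_mem hr

section JKGroup

open Matrix TwistedProd PresentedGroup

variable (p : ℕ) (lam : ℕ × ℕ)

lemma jk_gcomm_mem_center (x y : JKGroup p lam) :
    gcomm x y ∈ Subgroup.center (JKGroup p lam) :=
  gcomm_mem_center_of_closure (closure_range_of _)
    (fun i j k => by
      simpa only [map_gcomm, FreeGroup.lift_apply_of] using
        lift_of_eq_one_of_mem (rels := jkRels p lam) (Or.inl ⟨i, j, k, rfl⟩)) x y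

lemma jka₁_pow : jka₁ p lam ^ p = gcomm (jka₁ p lam) (jkb₁ p lam) := by
  have := lift_of_eq_one_of_mem (rels := jkRels p lam)
    (r := FreeGroup.of 0 ^ p * (gcomm (FreeGroup.of 0) (FreeGroup.of 2))⁻¹) (Or.inr (by simp))
  simpa only [map_mul, map_pow, map_inv, map_gcomm, FreeGroup.lift_apply_of, mul_inv_eq_one,
    jka₁, jkb₁] using this

lemma jka₂_pow :
    jka₂ p lam ^ p = gcomm (jka₁ p lam) (jkb₁ p lam ^ lam.1 * jkb₂ p lam ^ lam.2) := by
  have := lift_of_eq_one_of_mem (rels := jkRels p lam)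
    (r := FreeGroup.of 1 ^ p *
      (gcomm (FreeGroup.of 0) (FreeGroup.of 2 ^ lam.1 * FreeGroup.of 3 ^ lam.2))⁻¹)
    (Or.inr (by simp))
  simpa only [map_mul, map_pow, map_inv, map_gcomm, FreeGroup.lift_apply_of, mul_inv_eq_one,
    jka₁, jka₂, jkb₁, jkb₂] using this

lemma gcomm_jka₁_jka₂ : gcomm (jka₁ p lam) (jka₂ p lam) = 1 := by
  simpa only [map_gcomm, FreeGroup.lift_apply_of, jka₁, jka₂] using lift_of_eq_one_of_mem
    (rels := jkRels p lam) (r := gcomm (FreeGroup.of 0) (FreeGroup.of 1)) (Or.inr (by simp))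

lemma gcomm_jkb₁_jkb₂ : gcomm (jkb₁ p lam) (jkb₂ p lam) = 1 := by
  simpa only [map_gcomm, FreeGroup.lift_apply_of, jkb₁, jkb₂] using lift_of_eq_one_of_mem
    (rels := jkRels p lam) (r := gcomm (FreeGroup.of 2) (FreeGroup.of 3)) (Or.inr (by simp))

lemma gcomm_jka₁_pow_eq_one (y : JKGroup p lam) : gcomm (jka₁ p lam) y ^ p = 1 :=
  gcomm_pow_eq_one_of_pow_mem_center (jk_gcomm_mem_center p lam)
    (by rw [jka₁_pow]; exact jk_gcomm_mem_center p lam _ _) y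

lemma gcomm_jka₂_pow_eq_one (y : JKGroup p lam) : gcomm (jka₂ p lam) y ^ p = 1 :=
  gcomm_pow_eq_one_of_pow_mem_center (jk_gcomm_mem_center p lam)
    (by rw [jka₂_pow]; exact jk_gcomm_mem_center p lam _ _) y

def jkModelHom : JKGroup p lam →* JKCover p ⧸ jkCoverRels p lam :=
  toGroup (f := fun i => QuotientGroup.mk (jkCoverGen p i)) fun r hr => by
    rw [← FreeGroup.lift_unique ((QuotientGroup.mk' _).comp (FreeGroup.lift (jkCoverGen p)))
      fun i => by simp, MonoidHom.comp_apply, QuotientGroup.mk'_apply, QuotientGroup.eq_one_iff]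
    exact lift_jkCoverGen_mem p lam hr

lemma jkModelHom_word (k₁ k₂ l₁ l₂ : ℤ) :
    jkModelHom p lam (jka₁ p lam ^ k₁ * jka₂ p lam ^ k₂ * jkb₁ p lam ^ l₁ * jkb₂ p lam ^ l₂) =
      QuotientGroup.mk' _
        (jkCoverGen p 0 ^ k₁ * jkCoverGen p 1 ^ k₂ * jkCoverGen p 2 ^ l₁ *
          jkCoverGen p 3 ^ l₂) := by
  simp [jkModelHom, jka₁, jka₂, jkb₁, jkb₂]

lemma base_jkCoverGen_word (k₁ k₂ l₁ l₂ : ℤ) :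
    (jkCoverGen p 0 ^ k₁ * jkCoverGen p 1 ^ k₂ * jkCoverGen p 2 ^ l₁ * jkCoverGen p 3 ^ l₂).base =
      (![k₁, k₂], ![l₁, l₂]) := by
  ext i <;> fin_cases i <;> simp [base_zpow, jkCoverGen]

theorem jk_commute_iff (hp : p ≠ 0) (k₁ k₂ l₁ l₂ K₁ K₂ L₁ L₂ : ℤ) :
    Commute (jka₁ p lam ^ k₁ * jka₂ p lam ^ k₂ * jkb₁ p lam ^ l₁ * jkb₂ p lam ^ l₂)
        (jka₁ p lam ^ K₁ * jka₂ p lam ^ K₂ * jkb₁ p lam ^ L₁ * jkb₂ p lam ^ L₂) ↔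
      vecMulVec ![(k₁ : ZMod p), k₂] ![(L₁ : ZMod p), L₂] =
        vecMulVec ![(K₁ : ZMod p), K₂] ![(l₁ : ZMod p), l₂] := by
  constructor
  · intro h
    have h' := commute_iff_gcomm_eq_one.mp (h.map (jkModelHom p lam))
    rw [jkModelHom_word, jkModelHom_word, ← map_gcomm, QuotientGroup.mk'_apply,
      QuotientGroup.eq_one_iff, gcomm_eq, base_jkCoverGen_word, base_jkCoverGen_word,
      jkCoverRels, mk_zero_mem_graph_iff hp, sub_eq_zero, jkCocycle_apply, jkCocycle_apply] at h'
    convert h' using 2 <;> ext i <;> fin_cases i <;> rfl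
  · intro h
    rw [← Matrix.ext_iff] at h
    simp only [Fin.forall_fin_two, vecMulVec_apply, cons_val_zero, cons_val_one] at h
    obtain ⟨⟨h₁₁, h₁₂⟩, h₂₁, h₂₂⟩ := h
    have vanish {c : JKGroup p lam} (hc : c ^ p = 1) {x y z w : ℤ}
        (hxy : (x : ZMod p) * y = z * w) : c ^ (x * y - z * w) = 1 :=
      zpow_eq_one_of_intCast_eq_zero hc (by push_cast; exact sub_eq_zero.mpr hxy)
    rw [commute_iff_gcomm_eq_one, gcomm_words (jk_gcomm_mem_center p lam)
      (gcomm_jka₁_jka₂ p lam) (gcomm_jkb₁_jkb₂ p lam),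
      vanish (gcomm_jka₁_pow_eq_one p lam _) h₁₁, vanish (gcomm_jka₁_pow_eq_one p lam _) h₁₂,
      vanish (gcomm_jka₂_pow_eq_one p lam _) h₂₁, vanish (gcomm_jka₂_pow_eq_one p lam _) h₂₂]
    simp only [mul_one]

end JKGroup

theorem stmt_5_general (p : ℕ) (hp : p.Prime) (lam : ℕ × ℕ)
    (k₁ k₂ l₁ l₂ K₁ K₂ L₁ L₂ : ℤ) :
    (jka₁ p lam ^ k₁ * jka₂ p lam ^ k₂ * jkb₁ p lam ^ l₁ * jkb₂ p lam ^ l₂) *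
      (jka₁ p lam ^ K₁ * jka₂ p lam ^ K₂ * jkb₁ p lam ^ L₁ * jkb₂ p lam ^ L₂) =
    (jka₁ p lam ^ K₁ * jka₂ p lam ^ K₂ * jkb₁ p lam ^ L₁ * jkb₂ p lam ^ L₂) *
      (jka₁ p lam ^ k₁ * jka₂ p lam ^ k₂ * jkb₁ p lam ^ l₁ * jkb₂ p lam ^ l₂) ↔
    ((k₁ : ZMod p) = 0 ∧ (k₂ : ZMod p) = 0 ∧ (l₁ : ZMod p) = 0 ∧ (l₂ : ZMod p) = 0) ∨
    ((K₁ : ZMod p) = 0 ∧ (K₂ : ZMod p) = 0 ∧ (L₁ : ZMod p) = 0 ∧ (L₂ : ZMod p) = 0) ∨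
    ((l₁ : ZMod p) = 0 ∧ (l₂ : ZMod p) = 0 ∧ (L₁ : ZMod p) = 0 ∧ (L₂ : ZMod p) = 0) ∨
    ((k₁ : ZMod p) = 0 ∧ (k₂ : ZMod p) = 0 ∧ (K₁ : ZMod p) = 0 ∧ (K₂ : ZMod p) = 0) ∨
    (∃ n : ℤ, (K₁ : ZMod p) = (n : ZMod p) * (k₁ : ZMod p) ∧
      (K₂ : ZMod p) = (n : ZMod p) * (k₂ : ZMod p) ∧
      (L₁ : ZMod p) = (n : ZMod p) * (l₁ : ZMod p) ∧
      (L₂ : ZMod p) = (n : ZMod p) * (l₂ : ZMod p)) := by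
  have : Fact p.Prime := ⟨hp⟩
  refine (jk_commute_iff p lam hp.ne_zero k₁ k₂ l₁ l₂ K₁ K₂ L₁ L₂).trans ?_
  rw [vecMulVec_eq_vecMulVec_iff]
  simp only [Matrix.cons_eq_zero_iff, Matrix.zero_empty, Matrix.smul_cons, Matrix.smul_empty,
    Matrix.vecCons_inj, smul_eq_mul, and_true, and_assoc, ZMod.intCast_surjective.exists]

theorem stmt_5 (p : ℕ) (hp : p.Prime) (hodd : Odd p) (lam : ℕ × ℕ)
    (hlam : lam = (1, 0) ∨ (lam.1 ≤ p - 1 ∧ lam.2 = 1))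
    (k₁ k₂ l₁ l₂ K₁ K₂ L₁ L₂ : ℤ) :
    (jka₁ p lam ^ k₁ * jka₂ p lam ^ k₂ * jkb₁ p lam ^ l₁ * jkb₂ p lam ^ l₂) *
      (jka₁ p lam ^ K₁ * jka₂ p lam ^ K₂ * jkb₁ p lam ^ L₁ * jkb₂ p lam ^ L₂) =
    (jka₁ p lam ^ K₁ * jka₂ p lam ^ K₂ * jkb₁ p lam ^ L₁ * jkb₂ p lam ^ L₂) *
      (jka₁ p lam ^ k₁ * jka₂ p lam ^ k₂ * jkb₁ p lam ^ l₁ * jkb₂ p lam ^ l₂) ↔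
    ((k₁ : ZMod p) = 0 ∧ (k₂ : ZMod p) = 0 ∧ (l₁ : ZMod p) = 0 ∧ (l₂ : ZMod p) = 0) ∨
    ((K₁ : ZMod p) = 0 ∧ (K₂ : ZMod p) = 0 ∧ (L₁ : ZMod p) = 0 ∧ (L₂ : ZMod p) = 0) ∨
    ((l₁ : ZMod p) = 0 ∧ (l₂ : ZMod p) = 0 ∧ (L₁ : ZMod p) = 0 ∧ (L₂ : ZMod p) = 0) ∨
    ((k₁ : ZMod p) = 0 ∧ (k₂ : ZMod p) = 0 ∧ (K₁ : ZMod p) = 0 ∧ (K₂ : ZMod p) = 0) ∨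
    (∃ n : ℤ, (K₁ : ZMod p) = (n : ZMod p) * (k₁ : ZMod p) ∧
      (K₂ : ZMod p) = (n : ZMod p) * (k₂ : ZMod p) ∧
      (L₁ : ZMod p) = (n : ZMod p) * (l₁ : ZMod p) ∧
      (L₂ : ZMod p) = (n : ZMod p) * (l₂ : ZMod p)) :=
  stmt_5_general p hp lam k₁ k₂ l₁ l₂ K₁ K₂ L₁ L₂
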